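/- arXiv:1408.1533 — 2 statements merged into one kernel-verified Lean document; each statement's English description precedes it below -/
import Mathlib

section
/- Let k ≥ 2 be an integer and p > 1 a real number. There is a constant C = C(k,p) > 0 such that for all integers N ≥ 2 and all positive integers i, the exponential sum T_i(α) = ∑_{n ≤ N} b_{2^{i-1},2^i}(n) e(αn) satisfies ∫₀¹ |T_i(α)|^p dα ≤ C · 2^i N^{p-1}. -/
noncomputable def e (x : ℝ) : ℂ := Complex.exp (2 * Real.pi * Complex.I * x)

open Classical in
/-- `b k y z n = ∑_{d^k ∣ n, y ≤ d < z} μ(d)` for `n ≥ 1`, and `b k y z 0 = 0`. -/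
noncomputable def b (k : ℕ) (y z : ℝ) (n : ℕ) : ℤ :=
  ∑ d ∈ (Finset.Icc 1 n).filter (fun d : ℕ => y ≤ (d : ℝ) ∧ (d : ℝ) < z ∧ d ^ k ∣ n),
    ArithmeticFunction.moebius d

/-- The exponential sum `T_i(α) = ∑_{n ≤ N} b_{2^{i-1},2^i}(n) e(αn)`. -/
noncomputable def T (k N i : ℕ) (α : ℝ) : ℂ :=
  ∑ n ∈ Finset.Icc 1 N, (b k ((2 : ℝ) ^ (i - 1)) ((2 : ℝ) ^ i) n : ℂ) * e (α * n)

/-! Swapping the two sums writes `T_i(α)` as `∑_{2^{i-1} ≤ d < 2^i} μ(d) K_{⌊N/d^k⌋}(d^k α)`,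
where `K_M(β) = ∑_{m ≤ M} e(βm)` is a geometric sum, so `|K_M(β)| ≤ min(M, 1/(2β))` on
`(0, 1/2]` and `∫₀¹ |K_M|^p ≪_p M^{p-1}`. Hölder's inequality bounds `|T_i|^p` by
`2^{(i-1)(p-1)}` times the sum of the `|K|^p`; the dilation `α ↦ d^k α` preserves integrals over
a period and `⌊N/d^k⌋ ≤ N/2^{i-1}`, so
`∫₀¹ |T_i|^p ≪_p 2^{(i-1)p} (N/2^{i-1})^{p-1} = 2^{i-1} N^{p-1}`. -/

open Finset Real MeasureTheory

lemma e_add (x y : ℝ) : e (x + y) = e x * e y := by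
  rw [e, e, e, ← Complex.exp_add]; push_cast; ring_nf

lemma e_natCast (m : ℕ) : e m = 1 := by
  simpa [e, mul_comm] using Complex.exp_int_mul_two_pi_mul_I m

lemma norm_e (x : ℝ) : ‖e x‖ = 1 := by
  simp [e, Complex.norm_exp]

lemma e_mul_natCast (x : ℝ) (m : ℕ) : e (x * m) = e x ^ m := by
  rw [e, e, ← Complex.exp_nat_mul]; push_cast; ring_nf

lemma e_neg (x : ℝ) : e (-x) = starRingEnd ℂ (e x) := by
  rw [e, e, ← Complex.exp_conj]; simp [map_ofNat]

lemma continuous_e : Continuous e := by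
  unfold e; fun_prop

lemma norm_e_sub_one (x : ℝ) : ‖e x - 1‖ = 2 * |Real.sin (π * x)| := by
  have h := Complex.norm_exp_I_mul_ofReal_sub_one (2 * π * x)
  rw [show Complex.I * ((2 * π * x : ℝ) : ℂ) = 2 * π * Complex.I * x by push_cast; ring] at h
  rw [e, h, norm_mul, Real.norm_eq_abs, Real.norm_eq_abs]
  ring_nf

lemma four_mul_le_norm_e_sub_one {x : ℝ} (h0 : 0 ≤ x) (h1 : x ≤ 1 / 2) :
    4 * x ≤ ‖e x - 1‖ := by
  have hsin := Real.mul_le_sin (x := π * x) (by positivity) (by nlinarith [Real.pi_pos])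
  rw [norm_e_sub_one]
  have : 2 / π * (π * x) = 2 * x := by field_simp
  nlinarith [le_abs_self (Real.sin (π * x))]

noncomputable def geomExpSum (M : ℕ) (β : ℝ) : ℂ := ∑ m ∈ Icc 1 M, e (β * m)

lemma norm_geomExpSum_le (M : ℕ) (β : ℝ) : ‖geomExpSum M β‖ ≤ M := by
  calc ‖geomExpSum M β‖ ≤ ∑ m ∈ Icc 1 M, ‖e (β * m)‖ := norm_sum_le _ _
    _ = M := by simp [norm_e]

lemma geomExpSum_periodic (M : ℕ) : Function.Periodic (geomExpSum M) 1 := fun β ↦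
  sum_congr rfl fun m _ ↦ by rw [add_mul, one_mul, e_add, e_natCast, mul_one]

lemma continuous_geomExpSum (M : ℕ) : Continuous (geomExpSum M) :=
  continuous_finsetSum _ fun _ _ ↦ continuous_e.comp (by fun_prop)

lemma norm_geomExpSum_one_sub (M : ℕ) (β : ℝ) : ‖geomExpSum M (1 - β)‖ = ‖geomExpSum M β‖ := by
  have : geomExpSum M (1 - β) = starRingEnd ℂ (geomExpSum M β) := by
    rw [geomExpSum, geomExpSum, map_sum]
    refine sum_congr rfl fun m _ ↦ ?_
    rw [← e_neg, sub_mul, one_mul, sub_eq_neg_add, e_add, e_natCast, mul_one]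
  rw [this, RCLike.norm_conj]

lemma norm_geomExpSum_mul_norm_e_sub_one_le (M : ℕ) (β : ℝ) :
    ‖geomExpSum M β‖ * ‖e β - 1‖ ≤ 2 := by
  have hgeom : geomExpSum M β * (e β - 1) = e β ^ (M + 1) - e β ^ 1 := by
    rw [geomExpSum, ← Ico_add_one_right_eq_Icc]
    simp only [e_mul_natCast]
    exact geom_sum_Ico_mul (e β) (by omega)
  rw [← norm_mul, hgeom]
  calc _ ≤ ‖e β ^ (M + 1)‖ + ‖e β ^ 1‖ := norm_sub_le _ _
    _ = 2 := by rw [norm_pow, norm_pow, norm_e]; norm_num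

lemma norm_geomExpSum_le_inv (M : ℕ) {β : ℝ} (h0 : 0 < β) (h1 : β ≤ 1 / 2) :
    ‖geomExpSum M β‖ ≤ (2 * β)⁻¹ := by
  have h := norm_geomExpSum_mul_norm_e_sub_one_le M β
  have h4 := four_mul_le_norm_e_sub_one h0.le h1
  rw [← one_div, le_div_iff₀ (by positivity)]
  nlinarith [norm_nonneg (geomExpSum M β)]

lemma Function.Periodic.intervalIntegral_comp_natCast_mul {E : Type*} [NormedAddCommGroup E]
    [NormedSpace ℝ E] {f : ℝ → E} {T : ℝ} (hf : Function.Periodic f T)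
    (hint : ∀ t₁ t₂, IntervalIntegrable f volume t₁ t₂) {c : ℕ} (hc : c ≠ 0) :
    ∫ x in (0 : ℝ)..T, f (c * x) = ∫ x in (0 : ℝ)..T, f x := by
  have hc' : (c : ℝ) ≠ 0 := Nat.cast_ne_zero.mpr hc
  have h := hf.intervalIntegral_add_zsmul_eq c 0 hint
  simp only [zero_add, natCast_zsmul, nsmul_eq_mul] at h
  rw [intervalIntegral.integral_comp_mul_left f hc', mul_zero, h, ← Nat.cast_smul_eq_nsmul ℝ,
    inv_smul_smul₀ hc']

lemma intervalIntegral_zero_one_eq_two_mul_of_symm {f : ℝ → ℝ} (hf : ∀ x, f (1 - x) = f x)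
    (hcont : Continuous f) :
    ∫ x in (0 : ℝ)..1, f x = 2 * ∫ x in (0 : ℝ)..(1 / 2), f x := by
  have hupper : ∫ x in (1 / 2 : ℝ)..1, f x = ∫ x in (0 : ℝ)..(1 / 2), f x := by
    have h := intervalIntegral.integral_comp_sub_left f 1 (a := 0) (b := 1 / 2)
    simp only [hf] at h
    norm_num at h
    exact h.symm
  rw [← intervalIntegral.integral_add_adjacent_intervals (hcont.intervalIntegrable 0 (1 / 2))
    (hcont.intervalIntegrable _ 1), hupper, two_mul]

lemma intervalIntegral_rpow_neg_le {a b p : ℝ} (ha : 0 < a) (hab : a ≤ b) (hp : 1 < p) :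
    ∫ x in a..b, x ^ (-p) ≤ a ^ (1 - p) / (p - 1) := by
  have h0 : (0 : ℝ) ∉ Set.uIcc a b := by
    rw [Set.uIcc_of_le hab]; exact fun h ↦ ha.not_ge h.1
  rw [integral_rpow (Or.inr ⟨by linarith, h0⟩), neg_add_eq_sub, ← neg_div_neg_eq, neg_sub,
    neg_sub]
  gcongr
  exact sub_le_self _ (Real.rpow_nonneg (ha.le.trans hab) _)

lemma continuous_norm_geomExpSum_rpow (M : ℕ) {p : ℝ} (hp : 0 ≤ p) :
    Continuous fun β ↦ ‖geomExpSum M β‖ ^ p :=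
  (continuous_geomExpSum M).norm.rpow_const fun _ ↦ Or.inr hp

lemma intervalIntegral_norm_geomExpSum_rpow_near_zero_le {M : ℕ} (hM : 0 < M) {p : ℝ}
    (hp : 0 ≤ p) :
    ∫ β in (0 : ℝ)..(2 * M)⁻¹, ‖geomExpSum M β‖ ^ p ≤ (M : ℝ) ^ (p - 1) / 2 := by
  calc _ ≤ ∫ β in (0 : ℝ)..(2 * M)⁻¹, (M : ℝ) ^ p :=
        intervalIntegral.integral_mono_on (by positivity)
          ((continuous_norm_geomExpSum_rpow M hp).intervalIntegrable _ _)
          intervalIntegrable_const fun β _ ↦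
            Real.rpow_le_rpow (norm_nonneg _) (norm_geomExpSum_le M β) hp
    _ = (M : ℝ) ^ (p - 1) / 2 := by
        rw [intervalIntegral.integral_const, smul_eq_mul, Real.rpow_sub_one (by positivity)]
        field_simp
        ring

lemma intervalIntegral_norm_geomExpSum_rpow_away_from_zero_le {M : ℕ} (hM : 0 < M) {p : ℝ}
    (hp : 1 < p) :
    ∫ β in (2 * M : ℝ)⁻¹..(1 / 2), ‖geomExpSum M β‖ ^ p ≤ (M : ℝ) ^ (p - 1) / (2 * (p - 1)) := by
  have hM : (1 : ℝ) ≤ M := by exact_mod_cast hM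
  have ha2 : (2 * M : ℝ)⁻¹ ≤ 1 / 2 := by
    rw [one_div]; exact inv_anti₀ two_pos (by linarith)
  have hpos : ∀ β ∈ Set.uIcc (2 * M : ℝ)⁻¹ (1 / 2), 0 < β := fun β hβ ↦
    (by positivity : (0 : ℝ) < (2 * M : ℝ)⁻¹).trans_le (Set.uIcc_of_le ha2 ▸ hβ).1
  calc _ ≤ ∫ β in (2 * M : ℝ)⁻¹..(1 / 2), (2 * β) ^ (-p) := by
        refine intervalIntegral.integral_mono_on ha2
          ((continuous_norm_geomExpSum_rpow M (by linarith)).intervalIntegrable _ _) ?_ ?_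
        · refine ContinuousOn.intervalIntegrable fun β hβ ↦ ?_
          exact (Real.continuousAt_rpow_const _ _
            (Or.inl (by linarith [hpos β hβ]))).comp (by fun_prop) |>.continuousWithinAt
        · intro β hβ
          have hβ0 := hpos β (Set.Icc_subset_uIcc hβ)
          rw [Real.rpow_neg (by positivity), ← Real.inv_rpow (by positivity)]
          exact Real.rpow_le_rpow (norm_nonneg _) (norm_geomExpSum_le_inv M hβ0 hβ.2)
            (by linarith)
    _ = 2⁻¹ * ∫ u in (M : ℝ)⁻¹..1, u ^ (-p) := by
        rw [intervalIntegral.integral_comp_mul_left (fun u ↦ u ^ (-p)) two_ne_zero, smul_eq_mul]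
        congr 2
        · field_simp
        · norm_num
    _ ≤ 2⁻¹ * ((M : ℝ)⁻¹ ^ (1 - p) / (p - 1)) := by
        gcongr
        exact intervalIntegral_rpow_neg_le (by positivity) (inv_le_one_of_one_le₀ hM) hp
    _ = (M : ℝ) ^ (p - 1) / (2 * (p - 1)) := by
        rw [Real.inv_rpow (by positivity), ← Real.rpow_neg (by positivity), neg_sub]
        field_simp

lemma intervalIntegral_norm_geomExpSum_rpow_le (M : ℕ) {p : ℝ} (hp : 1 < p) :
    ∫ β in (0 : ℝ)..1, ‖geomExpSum M β‖ ^ p ≤ (1 + 1 / (p - 1)) * (M : ℝ) ^ (p - 1) := by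
  have hp0 : 0 < p := by linarith
  rcases Nat.eq_zero_or_pos M with rfl | hM
  · simp [geomExpSum, Real.zero_rpow hp0.ne', Real.zero_rpow (sub_pos.2 hp).ne']
  have hf := continuous_norm_geomExpSum_rpow M hp0.le
  -- `(2M)⁻¹` is where the bounds `M` and `(2β)⁻¹` on `‖geomExpSum M β‖` cross
  rw [intervalIntegral_zero_one_eq_two_mul_of_symm
      (fun β ↦ by simp only [norm_geomExpSum_one_sub]) hf,
    ← intervalIntegral.integral_add_adjacent_intervals (b := (2 * M : ℝ)⁻¹)
      (hf.intervalIntegrable _ _) (hf.intervalIntegrable _ _)]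
  have hnear := intervalIntegral_norm_geomExpSum_rpow_near_zero_le hM hp0.le
  have hfar := intervalIntegral_norm_geomExpSum_rpow_away_from_zero_le hM hp
  have hsplit : (1 + 1 / (p - 1)) * (M : ℝ) ^ (p - 1)
      = 2 * ((M : ℝ) ^ (p - 1) / 2 + (M : ℝ) ^ (p - 1) / (2 * (p - 1))) := by
    have : p - 1 ≠ 0 := by linarith
    field_simp
  linarith

lemma sum_filter_dvd_e_eq_geomExpSum (N : ℕ) {q : ℕ} (hq : 0 < q) (α : ℝ) :
    ∑ n ∈ Icc 1 N with q ∣ n, e (α * n) = geomExpSum (N / q) (q * α) := by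
  refine sum_nbij' (· / q) (q * ·) (fun n hn ↦ ?_) (fun m hm ↦ ?_) (fun n hn ↦ ?_)
    (fun m _ ↦ Nat.mul_div_cancel_left m hq) (fun n hn ↦ ?_)
  · obtain ⟨⟨hn1, hnN⟩, hqn⟩ := by simpa only [mem_filter, mem_Icc] using hn
    exact mem_Icc.2
      ⟨(Nat.one_le_div_iff hq).2 (Nat.le_of_dvd (by omega) hqn), Nat.div_le_div_right hnN⟩
  · obtain ⟨hm1, hmN⟩ := mem_Icc.1 hm
    refine mem_filter.2 ⟨mem_Icc.2 ⟨?_, ?_⟩, dvd_mul_right q m⟩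
    · exact Nat.one_le_iff_ne_zero.2 (by positivity)
    · rw [mul_comm]; exact (Nat.le_div_iff_mul_le hq).1 hmN
  · exact Nat.mul_div_cancel' (mem_filter.1 hn).2
  · obtain ⟨m, rfl⟩ := (mem_filter.1 hn).2
    rw [Nat.mul_div_cancel_left m hq]
    push_cast
    ring_nf

lemma b_natCast_eq_sum_filter_dvd {k n : ℕ} (hk : k ≠ 0) (hn : n ≠ 0) (y z : ℕ) :
    b k y z n = ∑ d ∈ Ico y z with d ^ k ∣ n, ArithmeticFunction.moebius d := by
  rw [b]
  refine sum_congr (ext fun d ↦ ?_) fun _ _ ↦ rfl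
  simp only [mem_filter, mem_Icc, mem_Ico, Nat.cast_le, Nat.cast_lt]
  constructor
  · rintro ⟨-, hyd, hdz, hdvd⟩
    exact ⟨⟨hyd, hdz⟩, hdvd⟩
  · rintro ⟨⟨hyd, hdz⟩, hdvd⟩
    have hd : d ≠ 0 := by
      rintro rfl
      exact hn (Nat.eq_zero_of_zero_dvd (by rwa [zero_pow hk] at hdvd))
    exact ⟨⟨Nat.one_le_iff_ne_zero.2 hd,
      (Nat.le_self_pow hk d).trans (Nat.le_of_dvd (Nat.pos_of_ne_zero hn) hdvd)⟩, hyd, hdz, hdvd⟩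

lemma T_eq_sum_moebius_mul_geomExpSum {k : ℕ} (hk : k ≠ 0) (N i : ℕ) (α : ℝ) :
    T k N i α = ∑ d ∈ Ico (2 ^ (i - 1)) (2 ^ i),
      (ArithmeticFunction.moebius d : ℂ) * geomExpSum (N / d ^ k) ((d ^ k : ℕ) * α) := by
  have hb : ∀ n ∈ Icc 1 N, (b k ((2 : ℝ) ^ (i - 1)) ((2 : ℝ) ^ i) n : ℂ)
      = ∑ d ∈ Ico (2 ^ (i - 1)) (2 ^ i) with d ^ k ∣ n, (ArithmeticFunction.moebius d : ℂ) := by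
    intro n hn
    have hn0 : n ≠ 0 := by simp only [mem_Icc] at hn; omega
    have := b_natCast_eq_sum_filter_dvd hk hn0 (2 ^ (i - 1)) (2 ^ i)
    push_cast at this
    rw [this, Int.cast_sum]
  rw [T, sum_congr rfl fun n hn ↦ by rw [hb n hn, sum_mul]]
  rw [sum_comm' (t' := Ico (2 ^ (i - 1)) (2 ^ i)) (s' := fun d ↦ {n ∈ Icc 1 N | d ^ k ∣ n})
    (fun n d ↦ by simp only [mem_filter]; tauto)]
  refine sum_congr rfl fun d hd ↦ ?_
  have hd0 : 0 < d ^ k := pow_pos (Nat.one_le_two_pow.trans (mem_Ico.1 hd).1) k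
  rw [← mul_sum, sum_filter_dvd_e_eq_geomExpSum N hd0]

lemma norm_sum_mul_rpow_le {R ι : Type*} [SeminormedRing R] (s : Finset ι) {c : ι → R}
    (hc : ∀ j ∈ s, ‖c j‖ ≤ 1) (z : ι → R) {p : ℝ} (hp : 1 ≤ p) :
    ‖∑ j ∈ s, c j * z j‖ ^ p ≤ (#s : ℝ) ^ (p - 1) * ∑ j ∈ s, ‖z j‖ ^ p := by
  have hnorm : ‖∑ j ∈ s, c j * z j‖ ≤ ∑ j ∈ s, ‖z j‖ :=
    (norm_sum_le _ _).trans (sum_le_sum fun j hj ↦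
      (norm_mul_le _ _).trans (mul_le_of_le_one_left (norm_nonneg _) (hc j hj)))
  calc _ ≤ (∑ j ∈ s, ‖z j‖) ^ p := Real.rpow_le_rpow (norm_nonneg _) hnorm (by linarith)
    _ ≤ _ := Real.rpow_sum_le_const_mul_sum_rpow_of_nonneg s hp fun j _ ↦ norm_nonneg _

lemma intervalIntegral_norm_sum_mul_geomExpSum_rpow_le {ι : Type*} (s : Finset ι) {c : ι → ℂ}
    (hc : ∀ j ∈ s, ‖c j‖ ≤ 1) (M : ι → ℕ) {q : ι → ℕ} (hq : ∀ j ∈ s, q j ≠ 0) {p : ℝ}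
    (hp : 1 < p) :
    ∫ α in (0 : ℝ)..1, ‖∑ j ∈ s, c j * geomExpSum (M j) (q j * α)‖ ^ p
      ≤ (1 + 1 / (p - 1)) * (#s : ℝ) ^ (p - 1) * ∑ j ∈ s, (M j : ℝ) ^ (p - 1) := by
  have hp0 : 0 ≤ p := by linarith
  have hK : ∀ j, Continuous fun α : ℝ ↦ geomExpSum (M j) (q j * α) := fun j ↦
    (continuous_geomExpSum _).comp (by fun_prop)
  have hcont : ∀ j, Continuous fun α : ℝ ↦ ‖geomExpSum (M j) (q j * α)‖ ^ p := fun j ↦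
    (hK j).norm.rpow_const fun _ ↦ Or.inr hp0
  have hscale : ∀ j ∈ s, ∫ α in (0 : ℝ)..1, ‖geomExpSum (M j) (q j * α)‖ ^ p
      = ∫ β in (0 : ℝ)..1, ‖geomExpSum (M j) β‖ ^ p := fun j hj ↦
    Function.Periodic.intervalIntegral_comp_natCast_mul (f := fun β ↦ ‖geomExpSum (M j) β‖ ^ p)
      (fun β ↦ by simp only [geomExpSum_periodic _ β])
      (fun _ _ ↦ (continuous_norm_geomExpSum_rpow _ hp0).intervalIntegrable _ _) (hq j hj)
  calc _ ≤ ∫ α in (0 : ℝ)..1, (#s : ℝ) ^ (p - 1) * ∑ j ∈ s, ‖geomExpSum (M j) (q j * α)‖ ^ p :=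
        intervalIntegral.integral_mono_on zero_le_one
          (((continuous_finsetSum _ fun j _ ↦ continuous_const.mul (hK j)).norm.rpow_const
            fun _ ↦ Or.inr hp0).intervalIntegrable _ _)
          ((continuous_const.mul (continuous_finsetSum _ fun j _ ↦ hcont j)).intervalIntegrable
            _ _)
          fun α _ ↦ norm_sum_mul_rpow_le s hc _ hp.le
    _ = (#s : ℝ) ^ (p - 1) * ∑ j ∈ s, ∫ β in (0 : ℝ)..1, ‖geomExpSum (M j) β‖ ^ p := by
        rw [intervalIntegral.integral_const_mul,
          intervalIntegral.integral_finsetSum fun j _ ↦ (hcont j).intervalIntegrable _ _,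
          sum_congr rfl hscale]
    _ ≤ (#s : ℝ) ^ (p - 1) * ∑ j ∈ s, (1 + 1 / (p - 1)) * (M j : ℝ) ^ (p - 1) := by
        gcongr with j
        exact intervalIntegral_norm_geomExpSum_rpow_le _ hp
    _ = _ := by rw [← mul_sum]; ring

lemma card_Ico_two_pow_le (i : ℕ) : #(Ico (2 ^ (i - 1)) (2 ^ i)) ≤ 2 ^ (i - 1) := by
  have : 2 ^ i ≤ 2 ^ (i - 1) * 2 := by
    rw [← pow_succ]; exact Nat.pow_le_pow_right two_pos (by omega)
  rw [Nat.card_Ico]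
  omega

lemma natCast_div_pow_le {k : ℕ} (hk : k ≠ 0) (N : ℕ) {X d : ℕ} (hX : 0 < X) (hd : X ≤ d) :
    ((N / d ^ k : ℕ) : ℝ) ≤ N / X := by
  refine Nat.cast_div_le.trans (div_le_div_of_nonneg_left (Nat.cast_nonneg _)
    (by exact_mod_cast hX) ?_)
  exact_mod_cast hd.trans (Nat.le_self_pow hk d)

theorem Ti_Lp_bound (k : ℕ) (hk : 2 ≤ k) (p : ℝ) (hp : 1 < p) :
    ∃ C : ℝ, 0 < C ∧ ∀ N : ℕ, 2 ≤ N → ∀ i : ℕ, 1 ≤ i →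
      (∫ α in (0:ℝ)..1, ‖T k N i α‖ ^ p) ≤ C * (2 : ℝ) ^ i * (N : ℝ) ^ (p - 1) := by
  have hp1 : 0 < p - 1 := sub_pos.2 hp
  have hk0 : k ≠ 0 := by omega
  refine ⟨1 + 1 / (p - 1), by positivity, fun N _ i _ ↦ ?_⟩
  set C := 1 + 1 / (p - 1)
  set X : ℕ := 2 ^ (i - 1)
  set D := Ico X (2 ^ i)
  have hX : 0 < X := by positivity
  have hcard : (#D : ℝ) ≤ X := by exact_mod_cast card_Ico_two_pow_le i
  have hM : ∀ d ∈ D, ((N / d ^ k : ℕ) : ℝ) ^ (p - 1) ≤ ((N : ℝ) / X) ^ (p - 1) := fun d hd ↦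
    Real.rpow_le_rpow (Nat.cast_nonneg _) (natCast_div_pow_le hk0 N hX (mem_Ico.1 hd).1) hp1.le
  simp_rw [T_eq_sum_moebius_mul_geomExpSum hk0]
  calc _ ≤ C * (#D : ℝ) ^ (p - 1) * ∑ d ∈ D, ((N / d ^ k : ℕ) : ℝ) ^ (p - 1) :=
        intervalIntegral_norm_sum_mul_geomExpSum_rpow_le D
          (fun d _ ↦ by
            rw [Complex.norm_intCast]; exact_mod_cast ArithmeticFunction.abs_moebius_le_one) _
          (fun d hd ↦ pow_ne_zero _ (hX.trans_le (mem_Ico.1 hd).1).ne') hp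
    _ ≤ C * (X : ℝ) ^ (p - 1) * (X * ((N : ℝ) / X) ^ (p - 1)) := by
        gcongr
        exact (sum_le_card_nsmul D _ _ hM).trans (by rw [nsmul_eq_mul]; gcongr)
    _ = C * X * (N : ℝ) ^ (p - 1) := by
        rw [mul_mul_mul_comm, ← Real.mul_rpow (by positivity) (by positivity),
          mul_div_cancel₀ _ (by positivity)]
    _ ≤ C * (2 : ℝ) ^ i * (N : ℝ) ^ (p - 1) := by
        gcongr
        exact_mod_cast Nat.pow_le_pow_right two_pos (Nat.sub_le i 1)
end

section
/- Let k ≥ 2 be an integer. There is a constant C = C(k) > 0 such that for all integers N ≥ 2 the following holds: if H and h are the integers determined by N^{1/k} ≤ 2^H < 2N^{1/k} and N^{1/(k+1)} < 2^h ≤ 2N^{1/(k+1)}, then the exponential sum T*(α) = ∑_{n ≤ N} b_{2^h,2^H}(n) e(αn) satisfies ∫₀¹ |T*(α)|² dα ≤ C · N^{2/(k+1)}. -/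
/-- The exponential sum `T*(α) = ∑_{n ≤ N} b_{2^h,2^H}(n) e(αn)`. -/
noncomputable def Tstar (k N h H : ℕ) (α : ℝ) : ℂ :=
  ∑ n ∈ Finset.Icc 1 N, (b k ((2 : ℝ) ^ h) ((2 : ℝ) ^ H) n : ℂ) * e (α * n)

/-!
By Parseval the integral is `∑_{n ≤ N} b(n)²`. As `|μ| ≤ 1`, `|b(n)|` is at most the number of
`d ≥ y := 2^h` with `d^k ∣ n`, so the sum of squares counts pairs `(d₁, d₂)` together with the
multiples `n ≤ N` of `lcm(d₁, d₂)^k`, and is at most `N ∑_{d₁, d₂ ≥ y} lcm(d₁, d₂)^{-k}`.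
Writing `lcm(d₁, d₂)^{-k} = gcd(d₁, d₂)^k (d₁ d₂)^{-k}` and bounding `gcd^k` by the sum of `g^k`
over all common divisors `g`, the double sum becomes `∑_g g^k (∑_{g ∣ d ≥ y} d^{-k})²`. The inner
sum is `≪ g^{-1} max(g, y)^{1-k}`, so the whole is `≪ ∑_g max(g, y)^{-k} ≪ y^{1-k}`, and
`N y^{1-k} ≤ N^{2/(k+1)}` because `y > N^{1/(k+1)}`.
-/

open Finset

section Parseval

open Complex ComplexConjugate

lemma e_mul_conj_e (α : ℝ) (n m : ℕ) :
    e (α * n) * conj (e (α * m)) = exp (2 * Real.pi * I * ((n : ℂ) - m) * α) := by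
  simp only [e]
  rw [← exp_conj, ← exp_add]
  congr 1
  simp only [map_mul, conj_I, conj_ofReal, map_ofNat, ofReal_mul, ofReal_natCast, conj_natCast]
  ring

lemma integral_e_mul_conj_e (n m : ℕ) :
    ∫ α in (0 : ℝ)..1, e (α * n) * conj (e (α * m)) = if n = m then 1 else 0 := by
  simp_rw [e_mul_conj_e]
  split_ifs with h
  · simp [h]
  · have hc : 2 * Real.pi * I * ((n : ℂ) - m) ≠ 0 := by
      simp [sub_eq_zero, h, Real.pi_ne_zero, I_ne_zero]
    have hper : exp (2 * Real.pi * I * ((n : ℂ) - m)) = 1 := by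
      convert exp_int_mul_two_pi_mul_I ((n : ℤ) - m) using 2
      push_cast
      ring
    rw [integral_exp_mul_complex hc]
    simp [hper]

lemma integral_norm_sq_sum_e (s : Finset ℕ) (c : ℕ → ℂ) :
    ∫ α in (0 : ℝ)..1, ‖∑ n ∈ s, c n * e (α * n)‖ ^ 2 = ∑ n ∈ s, ‖c n‖ ^ 2 := by
  have hexpand : ∀ α : ℝ, ((‖∑ n ∈ s, c n * e (α * n)‖ ^ 2 : ℝ) : ℂ) =
      ∑ n ∈ s, ∑ m ∈ s, c n * conj (c m) * (e (α * n) * conj (e (α * m))) := by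
    intro α
    rw [ofReal_pow, ← mul_conj', map_sum, sum_mul_sum]
    refine sum_congr rfl fun n _ => sum_congr rfl fun m _ => ?_
    rw [map_mul]
    ring
  have hcont : ∀ n m : ℕ,
      Continuous fun α : ℝ => c n * conj (c m) * (e (α * n) * conj (e (α * m))) := by
    intro n m
    simp_rw [e_mul_conj_e]
    fun_prop
  apply ofReal_injective
  rw [← intervalIntegral.integral_ofReal]
  simp_rw [hexpand]
  rw [intervalIntegral.integral_finsetSum fun n _ =>
    (continuous_finsetSum s fun m _ => hcont n m).intervalIntegrable 0 1]
  simp only [ofReal_sum, ofReal_pow]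
  refine sum_congr rfl fun n hn => ?_
  rw [intervalIntegral.integral_finsetSum fun m _ => (hcont n m).intervalIntegrable 0 1]
  simp only [intervalIntegral.integral_const_mul, integral_e_mul_conj_e, mul_ite, mul_one,
    mul_zero, sum_ite_eq, if_pos hn, mul_conj']

end Parseval

lemma sum_inv_pow_le_of_forall_le {k : ℕ} (hk : 2 ≤ k) {A : ℝ} (hA : 1 ≤ A) {s : Finset ℕ}
    (hs : ∀ a ∈ s, A ≤ a) : ∑ a ∈ s, ((a : ℝ) ^ k)⁻¹ ≤ 2 / A ^ (k - 1) := by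
  set m := ⌈A⌉₊
  have hm : 0 < m := Nat.ceil_pos.mpr (by linarith)
  have hmem : ∀ a ∈ s, a ∈ Ioo (m - 1) (s.sup id + 1) := fun a ha => by
    have : m ≤ a := Nat.ceil_le.mpr (hs a ha)
    have : a ≤ s.sup id := le_sup (f := id) ha
    simp only [mem_Ioo]
    omega
  obtain ⟨j, rfl⟩ := Nat.exists_eq_add_of_le hk
  calc ∑ a ∈ s, ((a : ℝ) ^ (2 + j))⁻¹
      ≤ ∑ a ∈ Ioo (m - 1) (s.sup id + 1), ((a : ℝ) ^ (2 + j))⁻¹ :=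
        sum_le_sum_of_subset_of_nonneg hmem fun _ _ _ => by positivity
    _ ≤ ∑ a ∈ Ioo (m - 1) (s.sup id + 1), ((m : ℝ) ^ j)⁻¹ * ((a : ℝ) ^ 2)⁻¹ := by
        refine sum_le_sum fun a ha => ?_
        have hma : m ≤ a := by simp only [mem_Ioo] at ha; omega
        rw [pow_add, mul_inv, mul_comm]
        gcongr
    _ = ((m : ℝ) ^ j)⁻¹ * ∑ a ∈ Ioo (m - 1) (s.sup id + 1), ((a : ℝ) ^ 2)⁻¹ := by
        rw [mul_sum]
    _ ≤ ((m : ℝ) ^ j)⁻¹ * (2 / (((m - 1 : ℕ) : ℝ) + 1)) := by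
        gcongr
        exact sum_Ioo_inv_sq_le _ _
    _ = 2 / (m : ℝ) ^ (2 + j - 1) := by
        have : (m : ℝ) ≠ 0 := by positivity
        rw [Nat.cast_sub hm, Nat.cast_one, sub_add_cancel, show 2 + j - 1 = j + 1 by omega,
          pow_succ]
        field_simp
    _ ≤ 2 / A ^ (2 + j - 1) := by
        gcongr
        exact Nat.le_ceil A

lemma sum_inv_pow_filter_dvd_le {k : ℕ} (hk : 2 ≤ k) {y : ℝ} (hy : 1 ≤ y) {s : Finset ℕ}
    (hs : ∀ d ∈ s, y ≤ d) {g : ℕ} (hg : 0 < g) :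
    ∑ d ∈ s with g ∣ d, ((d : ℝ) ^ k)⁻¹ ≤ 2 / (g * max (g : ℝ) y ^ (k - 1)) := by
  have hg' : (0 : ℝ) < g := by exact_mod_cast hg
  have hinj : Set.InjOn (g * ·) ((g * ·) ⁻¹' ↑s) := (mul_right_injective₀ hg.ne').injOn
  set t := s.preimage (g * ·) hinj
  have hsum : ∑ d ∈ s with g ∣ d, ((d : ℝ) ^ k)⁻¹ = (g ^ k : ℝ)⁻¹ * ∑ a ∈ t, ((a : ℝ) ^ k)⁻¹ := by
    rw [sum_filter, ← sum_preimage (g * ·) s hinj]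
    · simp [t, mul_sum, mul_pow, mul_comm]
    · rintro d - hd
      rw [if_neg]
      rintro ⟨a, rfl⟩
      exact hd ⟨a, rfl⟩
  have ht : ∀ a ∈ t, max (g : ℝ) y / g ≤ a := by
    intro a ha
    have hy' := hs _ (mem_preimage.mp ha)
    push_cast at hy'
    have : (1 : ℝ) ≤ a := by
      rcases Nat.eq_zero_or_pos a with rfl | ha
      · simp at hy'; linarith
      · exact_mod_cast ha
    rw [div_le_iff₀ hg', max_le_iff]
    constructor <;> nlinarith
  have hA : 1 ≤ max (g : ℝ) y / g := by rw [le_div_iff₀ hg']; simp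
  obtain ⟨j, rfl⟩ := Nat.exists_eq_add_of_le hk
  calc ∑ d ∈ s with g ∣ d, ((d : ℝ) ^ (2 + j))⁻¹
      = (g ^ (2 + j) : ℝ)⁻¹ * ∑ a ∈ t, ((a : ℝ) ^ (2 + j))⁻¹ := hsum
    _ ≤ (g ^ (2 + j) : ℝ)⁻¹ * (2 / (max (g : ℝ) y / g) ^ (2 + j - 1)) := by
        gcongr
        exact sum_inv_pow_le_of_forall_le hk hA ht
    _ = 2 / (g * max (g : ℝ) y ^ (2 + j - 1)) := by
        have : 0 < max (g : ℝ) y := by positivity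
        have := hg'.ne'
        rw [show 2 + j - 1 = j + 1 by omega, div_pow]
        field_simp
        ring

lemma sum_inv_max_pow_le {k : ℕ} (hk : 2 ≤ k) (M : ℕ) {y : ℝ} (hy : 1 ≤ y) :
    ∑ g ∈ Icc 1 M, (max (g : ℝ) y ^ k)⁻¹ ≤ 3 / y ^ (k - 1) := by
  have hy0 : 0 < y := by linarith
  set S := (Icc 1 M).filter fun g : ℕ => (g : ℝ) ≤ y
  have hcard : (#S : ℝ) ≤ y := by
    calc (#S : ℝ) ≤ #(Icc 1 ⌊y⌋₊) := by
          gcongr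
          intro g hg
          simp only [S, mem_filter, mem_Icc] at hg ⊢
          exact ⟨hg.1.1, Nat.le_floor hg.2⟩
      _ ≤ y := by simpa using Nat.floor_le hy0.le
  have hsmall : ∑ g ∈ S, (max (g : ℝ) y ^ k)⁻¹ ≤ 1 / y ^ (k - 1) := by
    calc ∑ g ∈ S, (max (g : ℝ) y ^ k)⁻¹ = #S * (y ^ k)⁻¹ := by
          rw [sum_congr rfl fun g hg => by rw [max_eq_right (mem_filter.mp hg).2], sum_const,
            nsmul_eq_mul]
      _ ≤ y * (y ^ k)⁻¹ := by gcongr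
      _ = 1 / y ^ (k - 1) := by
          obtain ⟨j, rfl⟩ := Nat.exists_eq_add_of_le' (by omega : 1 ≤ k)
          rw [Nat.add_sub_cancel, pow_succ]
          field_simp
  have hlarge : ∑ g ∈ (Icc 1 M).filter (fun g : ℕ => ¬ (g : ℝ) ≤ y), (max (g : ℝ) y ^ k)⁻¹
      ≤ 2 / y ^ (k - 1) := by
    have hyg : ∀ g ∈ (Icc 1 M).filter (fun g : ℕ => ¬ (g : ℝ) ≤ y), y ≤ g :=
      fun g hg => (not_le.mp (mem_filter.mp hg).2).le
    rw [sum_congr rfl fun g hg => by rw [max_eq_left (hyg g hg)]]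
    exact sum_inv_pow_le_of_forall_le hk hy hyg
  calc ∑ g ∈ Icc 1 M, (max (g : ℝ) y ^ k)⁻¹
      = ∑ g ∈ S, (max (g : ℝ) y ^ k)⁻¹ +
          ∑ g ∈ (Icc 1 M).filter (fun g : ℕ => ¬ (g : ℝ) ≤ y), (max (g : ℝ) y ^ k)⁻¹ :=
        (sum_filter_add_sum_filter_not _ _ _).symm
    _ ≤ 1 / y ^ (k - 1) + 2 / y ^ (k - 1) := add_le_add hsmall hlarge
    _ = 3 / y ^ (k - 1) := by ring

lemma inv_lcm_pow_le_sum_dvd {M d₁ d₂ : ℕ} (h₁ : d₁ ∈ Icc 1 M) (k : ℕ) :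
    ((Nat.lcm d₁ d₂ : ℝ) ^ k)⁻¹ ≤
      ∑ g ∈ Icc 1 M with g ∣ d₁ ∧ g ∣ d₂, (g : ℝ) ^ k * ((d₁ : ℝ) ^ k)⁻¹ * ((d₂ : ℝ) ^ k)⁻¹ := by
  obtain ⟨hd₁, hd₁M⟩ := mem_Icc.mp h₁
  have hgcd : 0 < Nat.gcd d₁ d₂ := Nat.gcd_pos_of_pos_left _ hd₁
  have hprod : (Nat.gcd d₁ d₂ : ℝ) * Nat.lcm d₁ d₂ = d₁ * d₂ := by
    exact_mod_cast Nat.gcd_mul_lcm d₁ d₂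
  have hlcm : (Nat.lcm d₁ d₂ : ℝ) = d₁ * d₂ / Nat.gcd d₁ d₂ := by
    rw [← hprod]
    field_simp
  calc ((Nat.lcm d₁ d₂ : ℝ) ^ k)⁻¹
      = (Nat.gcd d₁ d₂ : ℝ) ^ k * ((d₁ : ℝ) ^ k)⁻¹ * ((d₂ : ℝ) ^ k)⁻¹ := by
        rw [hlcm, div_pow, mul_pow, inv_div]
        ring
    _ ≤ _ := by
        refine single_le_sum (f := fun g : ℕ => (g : ℝ) ^ k * ((d₁ : ℝ) ^ k)⁻¹ * ((d₂ : ℝ) ^ k)⁻¹)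
          (fun _ _ => by positivity) ?_
        simp only [mem_filter, mem_Icc]
        exact ⟨⟨hgcd, (Nat.le_of_dvd hd₁ (Nat.gcd_dvd_left _ _)).trans hd₁M⟩,
          Nat.gcd_dvd_left _ _, Nat.gcd_dvd_right _ _⟩

lemma sum_sum_sum_filter_and_eq {ι κ R : Type*} [CommSemiring R] (s : Finset ι) (t : Finset κ)
    (P : κ → ι → Prop) [∀ g i, Decidable (P g i)] (w : κ → R) (x : ι → R) :
    ∑ i ∈ s, ∑ j ∈ s, ∑ g ∈ t with P g i ∧ P g j, w g * x i * x j =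
      ∑ g ∈ t, w g * (∑ i ∈ s with P g i, x i) ^ 2 := by
  simp only [sum_filter]
  simp_rw [sq, sum_mul_sum, mul_sum]
  refine (sum_congr rfl fun i _ => sum_comm).trans (sum_comm.trans
    (sum_congr rfl fun g _ => sum_congr rfl fun i _ => sum_congr rfl fun j _ => ?_))
  split_ifs <;> simp_all [mul_assoc]

lemma sum_sum_inv_lcm_pow_le {k : ℕ} (hk : 2 ≤ k) {y : ℝ} (hy : 1 ≤ y) {s : Finset ℕ}
    (hs : ∀ d ∈ s, y ≤ d) :
    ∑ d₁ ∈ s, ∑ d₂ ∈ s, ((Nat.lcm d₁ d₂ : ℝ) ^ k)⁻¹ ≤ 12 / y ^ (k - 1) := by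
  have hpos : ∀ d ∈ s, 0 < d := fun d hd => by exact_mod_cast (by linarith [hs d hd] : (0 : ℝ) < d)
  have hmem : ∀ d ∈ s, d ∈ Icc 1 (s.sup id) := fun d hd =>
    mem_Icc.mpr ⟨hpos d hd, le_sup (f := id) hd⟩
  have hterm : ∀ g ∈ Icc 1 (s.sup id),
      (g : ℝ) ^ k * (2 / (g * max (g : ℝ) y ^ (k - 1))) ^ 2 ≤ 4 * (max (g : ℝ) y ^ k)⁻¹ := by
    intro g hg
    have hg0 : (0 : ℝ) < g := by exact_mod_cast (mem_Icc.mp hg).1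
    have hgM : (g : ℝ) ≤ max (g : ℝ) y := le_max_left _ _
    have hM0 : 0 < max (g : ℝ) y := hg0.trans_le hgM
    obtain ⟨j, rfl⟩ := Nat.exists_eq_add_of_le hk
    calc (g : ℝ) ^ (2 + j) * (2 / (g * max (g : ℝ) y ^ (2 + j - 1))) ^ 2
        = 4 * (g : ℝ) ^ j / max (g : ℝ) y ^ (2 + j) / max (g : ℝ) y ^ j := by
          rw [show 2 + j - 1 = j + 1 by omega]
          field_simp
          ring
      _ ≤ 4 * max (g : ℝ) y ^ j / max (g : ℝ) y ^ (2 + j) / max (g : ℝ) y ^ j := by gcongr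
      _ = 4 * (max (g : ℝ) y ^ (2 + j))⁻¹ := by field_simp
  calc ∑ d₁ ∈ s, ∑ d₂ ∈ s, ((Nat.lcm d₁ d₂ : ℝ) ^ k)⁻¹
      ≤ ∑ d₁ ∈ s, ∑ d₂ ∈ s, ∑ g ∈ Icc 1 (s.sup id) with g ∣ d₁ ∧ g ∣ d₂,
          (g : ℝ) ^ k * ((d₁ : ℝ) ^ k)⁻¹ * ((d₂ : ℝ) ^ k)⁻¹ :=
        sum_le_sum fun d₁ h₁ => sum_le_sum fun d₂ h₂ =>
          inv_lcm_pow_le_sum_dvd (hmem d₁ h₁) k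
    _ = ∑ g ∈ Icc 1 (s.sup id), (g : ℝ) ^ k * (∑ d ∈ s with g ∣ d, ((d : ℝ) ^ k)⁻¹) ^ 2 :=
        sum_sum_sum_filter_and_eq _ _ _ _ _
    _ ≤ ∑ g ∈ Icc 1 (s.sup id), (g : ℝ) ^ k * (2 / (g * max (g : ℝ) y ^ (k - 1))) ^ 2 := by
        gcongr with g hg
        exact sum_inv_pow_filter_dvd_le hk hy hs (mem_Icc.mp hg).1
    _ ≤ ∑ g ∈ Icc 1 (s.sup id), 4 * (max (g : ℝ) y ^ k)⁻¹ := sum_le_sum hterm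
    _ ≤ 4 * (3 / y ^ (k - 1)) := by
        rw [← mul_sum]
        gcongr
        exact sum_inv_max_pow_le hk _ hy
    _ = 12 / y ^ (k - 1) := by ring

lemma sum_card_filter_sq_eq {α β : Type*} (s : Finset α) (t : Finset β) (R : β → α → Prop)
    [∀ d n, Decidable (R d n)] :
    ∑ n ∈ s, #{d ∈ t | R d n} ^ 2 = ∑ d₁ ∈ t, ∑ d₂ ∈ t, #{n ∈ s | R d₁ n ∧ R d₂ n} := by
  simp only [card_filter, sq, sum_mul_sum, ite_and, ite_mul, one_mul, zero_mul]
  rw [sum_comm]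
  exact sum_congr rfl fun d₁ _ => sum_comm

lemma card_filter_pow_dvd_and_pow_dvd_le (N d₁ d₂ k : ℕ) :
    (#{n ∈ Icc 1 N | d₁ ^ k ∣ n ∧ d₂ ^ k ∣ n} : ℝ) ≤ N / (Nat.lcm d₁ d₂ : ℝ) ^ k := by
  have hcard : #{n ∈ Icc 1 N | d₁ ^ k ∣ n ∧ d₂ ^ k ∣ n} ≤ N / Nat.lcm d₁ d₂ ^ k := by
    rw [← Nat.Ioc_filter_dvd_card_eq_div]
    refine card_le_card fun n hn => ?_
    simp only [mem_filter] at hn ⊢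
    exact ⟨hn.1, Nat.pow_lcm_pow ▸ Nat.lcm_dvd hn.2.1 hn.2.2⟩
  calc (#{n ∈ Icc 1 N | d₁ ^ k ∣ n ∧ d₂ ^ k ∣ n} : ℝ) ≤ (N / Nat.lcm d₁ d₂ ^ k : ℕ) := by
        exact_mod_cast hcard
    _ ≤ N / (Nat.lcm d₁ d₂ : ℝ) ^ k := by exact_mod_cast Nat.cast_div_le

lemma abs_b_le_card (k : ℕ) (y z : ℝ) {N n : ℕ} (hn : n ≤ N) :
    |b k y z n| ≤ #{d ∈ (Icc 1 N).filter (fun d : ℕ => y ≤ d) | d ^ k ∣ n} := by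
  calc |b k y z n| ≤ ∑ d ∈ (Icc 1 n).filter (fun d : ℕ => y ≤ d ∧ d < z ∧ d ^ k ∣ n),
        |ArithmeticFunction.moebius d| := by
        rw [b]
        exact abs_sum_le_sum_abs _ _
    _ ≤ ∑ d ∈ (Icc 1 n).filter (fun d : ℕ => y ≤ d ∧ d < z ∧ d ^ k ∣ n), 1 :=
        sum_le_sum fun _ _ => ArithmeticFunction.abs_moebius_le_one
    _ ≤ #{d ∈ (Icc 1 N).filter (fun d : ℕ => y ≤ d) | d ^ k ∣ n} := by
        rw [sum_const, nsmul_one, Nat.cast_le]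
        refine card_le_card fun d hd => ?_
        simp only [mem_filter, mem_Icc] at hd ⊢
        exact ⟨⟨⟨hd.1.1, hd.1.2.trans hn⟩, hd.2.1⟩, hd.2.2.2⟩

lemma sum_b_sq_le {k : ℕ} (hk : 2 ≤ k) {y : ℝ} (hy : 1 ≤ y) (z : ℝ) (N : ℕ) :
    ∑ n ∈ Icc 1 N, (b k y z n : ℝ) ^ 2 ≤ 12 * N / y ^ (k - 1) := by
  set D := (Icc 1 N).filter (fun d : ℕ => y ≤ d)
  calc ∑ n ∈ Icc 1 N, (b k y z n : ℝ) ^ 2 ≤ ∑ n ∈ Icc 1 N, (#{d ∈ D | d ^ k ∣ n} : ℝ) ^ 2 := by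
        refine sum_le_sum fun n hn => ?_
        rw [← sq_abs]
        gcongr
        exact_mod_cast abs_b_le_card k y z (mem_Icc.mp hn).2
    _ = ∑ d₁ ∈ D, ∑ d₂ ∈ D, (#{n ∈ Icc 1 N | d₁ ^ k ∣ n ∧ d₂ ^ k ∣ n} : ℝ) := by
        exact_mod_cast sum_card_filter_sq_eq (Icc 1 N) D (fun d n => d ^ k ∣ n)
    _ ≤ ∑ d₁ ∈ D, ∑ d₂ ∈ D, N / (Nat.lcm d₁ d₂ : ℝ) ^ k := by
        gcongr
        exact card_filter_pow_dvd_and_pow_dvd_le _ _ _ _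
    _ = N * ∑ d₁ ∈ D, ∑ d₂ ∈ D, ((Nat.lcm d₁ d₂ : ℝ) ^ k)⁻¹ := by
        simp only [mul_sum, div_eq_mul_inv]
    _ ≤ N * (12 / y ^ (k - 1)) := by
        gcongr
        exact sum_sum_inv_lcm_pow_le hk hy fun d hd => (mem_filter.mp hd).2
    _ = 12 * N / y ^ (k - 1) := by ring

lemma div_pow_le_rpow_of_rpow_le {k : ℕ} (hk : 1 ≤ k) {N y : ℝ} (hN : 0 < N)
    (hy : N ^ (1 / ((k : ℝ) + 1)) ≤ y) : N / y ^ (k - 1) ≤ N ^ (2 / ((k : ℝ) + 1)) := by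
  have hexp : 2 / ((k : ℝ) + 1) = 1 - 1 / ((k : ℝ) + 1) * ((k - 1 : ℕ) : ℝ) := by
    rw [Nat.cast_sub hk]
    field_simp
    ring
  calc N / y ^ (k - 1) ≤ N / (N ^ (1 / ((k : ℝ) + 1))) ^ (k - 1) := by
        gcongr
    _ = N ^ (2 / ((k : ℝ) + 1)) := by
        rw [hexp, Real.rpow_sub hN, Real.rpow_one, Real.rpow_mul hN.le, Real.rpow_natCast]

theorem Tstar_L2_bound (k : ℕ) (hk : 2 ≤ k) :
    ∃ C : ℝ, 0 < C ∧ ∀ N : ℕ, 2 ≤ N → ∀ H h : ℕ,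
      (N : ℝ) ^ (1 / (k : ℝ)) ≤ (2 : ℝ) ^ H →
      (2 : ℝ) ^ H < 2 * (N : ℝ) ^ (1 / (k : ℝ)) →
      (N : ℝ) ^ (1 / ((k : ℝ) + 1)) < (2 : ℝ) ^ h →
      (2 : ℝ) ^ h ≤ 2 * (N : ℝ) ^ (1 / ((k : ℝ) + 1)) →
      (∫ α in (0:ℝ)..1, ‖Tstar k N h H α‖ ^ 2)
        ≤ C * (N : ℝ) ^ (2 / ((k : ℝ) + 1)) := by
  refine ⟨12, by norm_num, fun N hN H h _ _ hy _ => ?_⟩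
  have hN0 : (0 : ℝ) < N := by positivity
  calc ∫ α in (0:ℝ)..1, ‖Tstar k N h H α‖ ^ 2
      = ∑ n ∈ Icc 1 N, (b k ((2 : ℝ) ^ h) ((2 : ℝ) ^ H) n : ℝ) ^ 2 := by
        simp only [Tstar, integral_norm_sq_sum_e, Complex.norm_intCast, sq_abs]
    _ ≤ 12 * N / ((2 : ℝ) ^ h) ^ (k - 1) := sum_b_sq_le hk (one_le_pow₀ one_le_two) _ N
    _ ≤ 12 * (N : ℝ) ^ (2 / ((k : ℝ) + 1)) := by
        rw [mul_div_assoc]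
        gcongr
        exact div_pow_le_rpow_of_rpow_le (by omega) hN0 hy.le
end
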